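/- Let X be the smooth vector field on ℝ^{1+2n}, with coordinates (t, q¹,…,qⁿ, p₁,…,pₙ), given by X(t,q,p) = (1, Q(t,q,p), P(t,q,p)) with Q, P : ℝ^{1+2n} → ℝⁿ smooth, let R be a Jacobi multiplier for X, and let Y be a smooth vector field with components (σ, ξ¹,…,ξⁿ, η₁,…,ηₙ) satisfying [Y,X] = h·X for some smooth function h. Then the function I = (1/R)·(∂(Rσ)/∂t + ∑ᵢ(∂(Rξⁱ)/∂qⁱ + ∂(Rηᵢ)/∂pᵢ)) − X(σ) is a first integral of X, i.e. X(I) = 0 identically. -/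

import Mathlib

/-- The extended phase space ℝ^{1+2n} with coordinates (t, q, p). -/
abbrev Evo (n : ℕ) := ℝ × (Fin n → ℝ) × (Fin n → ℝ)

/-- The divergence of a vector field on ℝ^{1+2n}: the trace of its Fréchet derivative. -/
noncomputable def ediv {n : ℕ} (Z : Evo n → Evo n) (z : Evo n) : ℝ :=
  LinearMap.trace ℝ (Evo n) (fderiv ℝ Z z : Evo n →ₗ[ℝ] Evo n)

/-- The Lie bracket of vector fields: [Z,Y](z) = DY(z)(Z(z)) − DZ(z)(Y(z)). -/
noncomputable def elieBracket {n : ℕ} (Z Y : Evo n → Evo n) (z : Evo n) : Evo n :=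
  fderiv ℝ Y z (Z z) - fderiv ℝ Z z (Y z)

namespace Stmt15

variable {n : ℕ}

abbrev J (n : ℕ) := Unit ⊕ Fin n ⊕ Fin n

noncomputable def bas (n : ℕ) : Module.Basis (J n) ℝ (Evo n) :=
  (Module.Basis.singleton Unit ℝ).prod ((Pi.basisFun ℝ (Fin n)).prod (Pi.basisFun ℝ (Fin n)))

noncomputable def eV : J n → Evo n
  | .inl _ => (1, 0, 0)
  | .inr (.inl i) => (0, Pi.single i 1, 0)
  | .inr (.inr i) => (0, 0, Pi.single i 1)

noncomputable def pV : J n → (Evo n →L[ℝ] ℝ)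
  | .inl _ => ContinuousLinearMap.fst ℝ ℝ _
  | .inr (.inl i) => (ContinuousLinearMap.proj i).comp
      ((ContinuousLinearMap.fst ℝ (Fin n → ℝ) (Fin n → ℝ)).comp
        (ContinuousLinearMap.snd ℝ ℝ ((Fin n → ℝ) × (Fin n → ℝ))))
  | .inr (.inr i) => (ContinuousLinearMap.proj i).comp
      ((ContinuousLinearMap.snd ℝ (Fin n → ℝ) (Fin n → ℝ)).comp
        (ContinuousLinearMap.snd ℝ ℝ ((Fin n → ℝ) × (Fin n → ℝ))))

@[simp] lemma pV_inl (x : Evo n) : pV (Sum.inl ()) x = x.1 := rfl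
@[simp] lemma pV_q (i : Fin n) (x : Evo n) : pV (Sum.inr (Sum.inl i)) x = x.2.1 i := rfl
@[simp] lemma pV_p (i : Fin n) (x : Evo n) : pV (Sum.inr (Sum.inr i)) x = x.2.2 i := rfl

lemma bas_eq (j : J n) : bas n j = eV j := by
  rcases j with _ | i | i <;>
    simp [bas, eV, Module.Basis.prod_apply, Prod.ext_iff, Pi.basisFun_apply]

lemma repr_eq (x : Evo n) (j : J n) : (bas n).repr x j = pV j x := by
  rcases j with _ | i | i <;>
    simp [bas, pV, Module.Basis.prod_repr_inl, Module.Basis.prod_repr_inr, Module.Basis.singleton_repr,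
      Pi.basisFun_repr]

lemma trace_eq (L : Evo n →L[ℝ] Evo n) :
    LinearMap.trace ℝ (Evo n) (L : Evo n →ₗ[ℝ] Evo n) = ∑ j, pV j (L (eV j)) := by
  rw [LinearMap.trace_eq_matrix_trace ℝ (bas n), Matrix.trace]
  simp only [Matrix.diag, LinearMap.toMatrix_apply, repr_eq, bas_eq]
  rfl

lemma expand (x : Evo n) : ∑ j, pV j x • eV j = x := by
  conv_rhs => rw [← (bas n).sum_repr x]
  simp only [repr_eq, bas_eq]

lemma clm_expand (φ : Evo n →L[ℝ] ℝ) (x : Evo n) : φ x = ∑ j, pV j x * φ (eV j) := by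
  conv_lhs => rw [← expand x]
  rw [map_sum]
  simp [smul_eq_mul]

/-- The divergence in coordinates. -/
noncomputable def dv (f : Evo n → Evo n) (w : Evo n) : ℝ :=
  ∑ j, pV j (fderiv ℝ f w (eV j))

lemma ediv_eq_dv (f : Evo n → Evo n) (w : Evo n) : ediv f w = dv f w := trace_eq _

variable {F : Type*} [NormedAddCommGroup F] [NormedSpace ℝ F]

lemma smooth_fderiv {f : Evo n → F} (hf : ContDiff ℝ (⊤ : ℕ∞) f) :
    ContDiff ℝ (⊤ : ℕ∞) (fderiv ℝ f) := hf.fderiv_right (by simp)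

lemma diff_f {f : Evo n → F} (hf : ContDiff ℝ (⊤ : ℕ∞) f) (z : Evo n) :
    DifferentiableAt ℝ f z := (hf.differentiable (by simp)) z

lemma smooth_app {f : Evo n → F} {v : Evo n → Evo n} (hf : ContDiff ℝ (⊤ : ℕ∞) f)
    (hv : ContDiff ℝ (⊤ : ℕ∞) v) : ContDiff ℝ (⊤ : ℕ∞) (fun w => fderiv ℝ f w (v w)) :=
  (smooth_fderiv hf).clm_apply hv

lemma smooth_dv {f : Evo n → Evo n} (hf : ContDiff ℝ (⊤ : ℕ∞) f) : ContDiff ℝ (⊤ : ℕ∞) (dv f) :=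
  ContDiff.sum fun j _ => (pV j).contDiff.comp ((smooth_fderiv hf).clm_apply contDiff_const)

lemma sym {f : Evo n → F} (hf : ContDiff ℝ (⊤ : ℕ∞) f) (z v w : Evo n) :
    fderiv ℝ (fderiv ℝ f) z v w = fderiv ℝ (fderiv ℝ f) z w v :=
  second_derivative_symmetric (fun y => (diff_f hf y).hasFDerivAt)
    ((diff_f (smooth_fderiv hf) z).hasFDerivAt) v w

lemma fderiv_fderiv_apply {f : Evo n → F} {v : Evo n → Evo n} (hf : ContDiff ℝ (⊤ : ℕ∞) f)
    (hv : ContDiff ℝ (⊤ : ℕ∞) v) (z u : Evo n) :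
    fderiv ℝ (fun w => fderiv ℝ f w (v w)) z u
      = fderiv ℝ (fderiv ℝ f) z u (v z) + fderiv ℝ f z (fderiv ℝ v z u) := by
  rw [fderiv_clm_apply (diff_f (smooth_fderiv hf) z) (diff_f hv z)]
  simp [add_comm]

lemma pV_fderiv {z : Evo n} {f : Evo n → Evo n} (hf : DifferentiableAt ℝ f z) (j : J n)
    (v : Evo n) :
    fderiv ℝ (fun w => pV j (f w)) z v = pV j (fderiv ℝ f z v) := by
  have : HasFDerivAt (fun w => pV j (f w)) ((pV j).comp (fderiv ℝ f z)) z :=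
    ((pV j).hasFDerivAt).comp z hf.hasFDerivAt
  rw [this.fderiv]; rfl

lemma fderiv_dv {f : Evo n → Evo n} (hf : ContDiff ℝ (⊤ : ℕ∞) f) (z u : Evo n) :
    fderiv ℝ (dv f) z u = ∑ j, pV j (fderiv ℝ (fderiv ℝ f) z u (eV j)) := by
  have H : HasFDerivAt (dv f)
      (∑ j, (pV j).comp ((fderiv ℝ (fderiv ℝ f) z).flip (eV j))) z := by
    apply HasFDerivAt.fun_sum
    intro j _
    have h1 : HasFDerivAt (fun w => fderiv ℝ f w (eV j))
        ((fderiv ℝ (fderiv ℝ f) z).flip (eV j)) z := by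
      have := (diff_f (smooth_fderiv hf) z).hasFDerivAt.clm_apply
        (hasFDerivAt_const (eV j) z)
      simpa using this
    exact ((pV j).hasFDerivAt).comp z h1
  rw [H.fderiv]
  simp

lemma cross (A B : Evo n →L[ℝ] Evo n) :
    ∑ j, pV j (A (B (eV j))) = ∑ j, pV j (B (A (eV j))) := by
  have h1 : ∀ A B : Evo n →L[ℝ] Evo n,
      ∑ j, pV j (A (B (eV j))) = ∑ j, ∑ k, pV k (B (eV j)) * pV j (A (eV k)) := by
    intro A B
    refine Finset.sum_congr rfl fun j _ => ?_
    simpa using clm_expand ((pV j).comp A) (B (eV j))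
  rw [h1, h1, Finset.sum_comm]
  exact Finset.sum_congr rfl fun j _ => Finset.sum_congr rfl fun k _ => mul_comm _ _

set_option maxHeartbeats 2000000 in
/-- The core computation: if `R` is a Jacobi multiplier for `X` and `[Y,X] = h·X`, then
`Y(R)/R + div Y + h` is a first integral of `X`. -/
theorem key (X Y : Evo n → Evo n) (R h : Evo n → ℝ)
    (hX : ContDiff ℝ (⊤ : ℕ∞) X) (hY : ContDiff ℝ (⊤ : ℕ∞) Y) (hR : ContDiff ℝ (⊤ : ℕ∞) R) (hh : ContDiff ℝ (⊤ : ℕ∞) h)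
    (hRpos : ∀ w, 0 < R w)
    (hJ : ∀ w, fderiv ℝ R w (X w) + R w * dv X w = 0)
    (hB : ∀ w, fderiv ℝ X w (Y w) - fderiv ℝ Y w (X w) = h w • X w) (z : Evo n) :
    fderiv ℝ (fun w => fderiv ℝ R w (Y w) / R w + dv Y w + h w) z (X z) = 0 := by
  have hne : ∀ w, R w ≠ 0 := fun w => (hRpos w).ne'
  -- F5 : XR as a function
  have F5 : ∀ w, fderiv ℝ R w (X w) = -(R w * dv X w) := fun w => by linarith [hJ w]
  -- F3 : the divergence identity from the bracket relation
  have F3 : fderiv ℝ (dv Y) z (X z)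
      = fderiv ℝ (dv X) z (Y z) - fderiv ℝ h z (X z) - h z * dv X z := by
    have hfun : (fun w => fderiv ℝ X w (Y w))
        = fun w => fderiv ℝ Y w (X w) + h w • X w := by
      funext w; rw [← hB w]; abel
    have EL : HasFDerivAt (fun w => fderiv ℝ X w (Y w))
        ((fderiv ℝ X z).comp (fderiv ℝ Y z) + (fderiv ℝ (fderiv ℝ X) z).flip (Y z)) z :=
      (diff_f (smooth_fderiv hX) z).hasFDerivAt.clm_apply (diff_f hY z).hasFDerivAt
    have ER : HasFDerivAt (fun w => fderiv ℝ Y w (X w) + h w • X w)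
        (((fderiv ℝ Y z).comp (fderiv ℝ X z) + (fderiv ℝ (fderiv ℝ Y) z).flip (X z)) +
          (h z • fderiv ℝ X z + (fderiv ℝ h z).smulRight (X z))) z :=
      ((diff_f (smooth_fderiv hY) z).hasFDerivAt.clm_apply (diff_f hX z).hasFDerivAt).add
        ((diff_f hh z).hasFDerivAt.smul (diff_f hX z).hasFDerivAt)
    have Ee := (hfun ▸ EL).unique ER
    have Esum : ∑ j, pV j (((fderiv ℝ X z).comp (fderiv ℝ Y z)
          + (fderiv ℝ (fderiv ℝ X) z).flip (Y z)) (eV j))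
        = ∑ j, pV j ((((fderiv ℝ Y z).comp (fderiv ℝ X z)
            + (fderiv ℝ (fderiv ℝ Y) z).flip (X z)) +
          (h z • fderiv ℝ X z + (fderiv ℝ h z).smulRight (X z))) (eV j)) := by rw [Ee]
    simp only [ContinuousLinearMap.add_apply, ContinuousLinearMap.coe_comp',
      Function.comp_apply, ContinuousLinearMap.flip_apply,
      ContinuousLinearMap.smul_apply, ContinuousLinearMap.smulRight_apply,
      map_add, map_smul, smul_eq_mul, Finset.sum_add_distrib] at Esum
    rw [cross (fderiv ℝ X z) (fderiv ℝ Y z)] at Esum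
    have sX : ∑ j, pV j (fderiv ℝ (fderiv ℝ X) z (eV j) (Y z))
        = fderiv ℝ (dv X) z (Y z) := by
      rw [fderiv_dv hX z (Y z)]
      exact Finset.sum_congr rfl fun j _ => congrArg (pV j) (sym hX z (eV j) (Y z))
    have sY : ∑ j, pV j (fderiv ℝ (fderiv ℝ Y) z (eV j) (X z))
        = fderiv ℝ (dv Y) z (X z) := by
      rw [fderiv_dv hY z (X z)]
      exact Finset.sum_congr rfl fun j _ => congrArg (pV j) (sym hY z (eV j) (X z))
    have sh : ∑ j, fderiv ℝ h z (eV j) * pV j (X z) = fderiv ℝ h z (X z) := by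
      rw [clm_expand (fderiv ℝ h z) (X z)]
      exact Finset.sum_congr rfl fun j _ => mul_comm _ _
    have sm : ∑ j, h z * pV j (fderiv ℝ X z (eV j)) = h z * dv X z := by
      rw [dv, Finset.mul_sum]
    rw [sX, sY, sh, sm] at Esum
    linarith
  -- F4 : the bracket relation applied to R
  have F4 : fderiv ℝ (fun w => fderiv ℝ R w (Y w)) z (X z)
      = fderiv ℝ (fun w => fderiv ℝ R w (X w)) z (Y z) - h z * fderiv ℝ R z (X z) := by
    rw [fderiv_fderiv_apply hR hY z (X z), fderiv_fderiv_apply hR hX z (Y z),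
      sym hR z (X z) (Y z)]
    have h5 : fderiv ℝ R z (fderiv ℝ X z (Y z)) - fderiv ℝ R z (fderiv ℝ Y z (X z))
        = h z * fderiv ℝ R z (X z) := by
      rw [← map_sub, hB z, map_smul, smul_eq_mul]
    linarith
  -- T5 : derivative of XR as a product
  have T5eq : fderiv ℝ (fun w => fderiv ℝ R w (X w)) z (Y z)
      = -(fderiv ℝ R z (Y z) * dv X z + R z * fderiv ℝ (dv X) z (Y z)) := by
    have hXRfun : (fun w => fderiv ℝ R w (X w)) = fun w => -(R w * dv X w) := funext F5
    rw [hXRfun, fderiv_fun_neg, fderiv_fun_mul (diff_f hR z) (diff_f (smooth_dv hX) z)]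
    simp only [ContinuousLinearMap.neg_apply, ContinuousLinearMap.add_apply,
      ContinuousLinearMap.smul_apply, smul_eq_mul]
    ring
  -- derivative of (R w)⁻¹
  have hginv : fderiv ℝ (fun u => (R u)⁻¹) z (X z)
      = -(fderiv ℝ R z (X z) / (R z) ^ 2) := by
    have h1 : (fun u => R u * (R u)⁻¹) = fun _ => (1 : ℝ) :=
      funext fun u => mul_inv_cancel₀ (hne u)
    have h2 := fderiv_fun_mul (c := R) (d := fun u => (R u)⁻¹) (diff_f hR z) ((diff_f hR z).inv (hne z))
    rw [h1, fderiv_fun_const] at h2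
    have h3 := congrFun (congrArg (fun L : Evo n →L[ℝ] ℝ => (L : Evo n → ℝ)) h2) (X z)
    simp only [Pi.zero_apply, ContinuousLinearMap.add_apply,
      ContinuousLinearMap.smul_apply, smul_eq_mul, ContinuousLinearMap.zero_apply] at h3
    have hz2 : R z ≠ 0 := hne z
    field_simp at h3 ⊢
    nlinarith [h3]
  -- differentiabilities
  have dYR : DifferentiableAt ℝ (fun w => fderiv ℝ R w (Y w)) z := diff_f (smooth_app hR hY) z
  have dInv : DifferentiableAt ℝ (fun u => (R u)⁻¹) z := (diff_f hR z).inv (hne z)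
  have dM : DifferentiableAt ℝ (fun w => fderiv ℝ R w (Y w) * (R w)⁻¹) z := dYR.mul dInv
  have ddvY : DifferentiableAt ℝ (dv Y) z := diff_f (smooth_dv hY) z
  have dh : DifferentiableAt ℝ h z := diff_f hh z
  -- final computation
  have hgoalfun : (fun w => fderiv ℝ R w (Y w) / R w + dv Y w + h w)
      = fun w => fderiv ℝ R w (Y w) * (R w)⁻¹ + dv Y w + h w := by
    funext w; rw [div_eq_mul_inv]
  rw [hgoalfun, fderiv_fun_add (f := fun w => fderiv ℝ R w (Y w) * (R w)⁻¹ + dv Y w) (dM.add ddvY) dh, fderiv_fun_add dM ddvY,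
    fderiv_fun_mul dYR dInv]
  simp only [ContinuousLinearMap.add_apply, ContinuousLinearMap.smul_apply, smul_eq_mul]
  rw [hginv, F3, F4, T5eq, F5 z]
  have hz2 : R z ≠ 0 := hne z
  field_simp
  ring
end Stmt15

set_option maxHeartbeats 2000000 in
/-- Let `X(t,q,p) = (1, Q(t,q,p), P(t,q,p))` be a smooth vector field on
ℝ^{1+2n}, let `R` be a Jacobi multiplier for `X` (smooth, positive, with
`X(R) + R·div X = 0`), and let `Y = (σ, ξ, η)` be a smooth vector field with `[Y,X] = h·X`
for some smooth `h`. Then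
`I = (1/R)·(∂(Rσ)/∂t + ∑ᵢ(∂(Rξⁱ)/∂qⁱ + ∂(Rηᵢ)/∂pᵢ)) − X(σ)` is a first integral of `X`. -/
theorem stmt_15 {n : ℕ} (Q P : Evo n → (Fin n → ℝ)) (R : Evo n → ℝ)
    (σ : Evo n → ℝ) (ξ η : Evo n → (Fin n → ℝ)) (h : Evo n → ℝ)
    (hQ : ContDiff ℝ (⊤ : ℕ∞) Q) (hP : ContDiff ℝ (⊤ : ℕ∞) P) (hR : ContDiff ℝ (⊤ : ℕ∞) R)
    (hσ : ContDiff ℝ (⊤ : ℕ∞) σ) (hξ : ContDiff ℝ (⊤ : ℕ∞) ξ) (hη : ContDiff ℝ (⊤ : ℕ∞) η)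
    (hh : ContDiff ℝ (⊤ : ℕ∞) h)
    (hRpos : ∀ z, 0 < R z)
    (hJacobi : ∀ z : Evo n,
      fderiv ℝ R z (1, Q z, P z) + R z * ediv (fun w => (1, Q w, P w)) z = 0)
    (hnorm : ∀ z : Evo n,
      elieBracket (fun w => (σ w, ξ w, η w)) (fun w => (1, Q w, P w)) z
        = h z • (1, Q z, P z)) :
    ∀ z : Evo n,
      fderiv ℝ (fun w : Evo n =>
        (1 / R w) * (fderiv ℝ (fun u => R u * σ u) w (1, 0, 0)
          + ∑ i, (fderiv ℝ (fun u => R u * ξ u i) w (0, Pi.single i 1, 0)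
              + fderiv ℝ (fun u => R u * η u i) w (0, 0, Pi.single i 1)))
        - fderiv ℝ σ w (1, Q w, P w))
        z (1, Q z, P z) = 0 := by
  have hX : ContDiff ℝ (⊤ : ℕ∞) (fun w : Evo n => ((1 : ℝ), Q w, P w)) :=
    contDiff_const.prodMk (hQ.prodMk hP)
  have hY : ContDiff ℝ (⊤ : ℕ∞) (fun w : Evo n => ((σ w, ξ w, η w) : Evo n)) :=
    hσ.prodMk (hξ.prodMk hη)
  have hJ : ∀ w : Evo n, fderiv ℝ R w ((1 : ℝ), Q w, P w)
      + R w * Stmt15.dv (fun u : Evo n => ((1 : ℝ), Q u, P u)) w = 0 := by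
    intro w
    have := hJacobi w
    rwa [Stmt15.ediv_eq_dv] at this
  have hB : ∀ w : Evo n, fderiv ℝ (fun u : Evo n => ((1 : ℝ), Q u, P u)) w (σ w, ξ w, η w)
      - fderiv ℝ (fun u : Evo n => ((σ u, ξ u, η u) : Evo n)) w ((1 : ℝ), Q w, P w)
      = h w • ((1 : ℝ), Q w, P w) := by
    intro w
    have := hnorm w
    simpa [elieBracket] using this
  intro z
  have F1 : ∀ w : Evo n, fderiv ℝ σ w ((1 : ℝ), Q w, P w) = - h w := by
    intro w
    have h0 := congrArg (Stmt15.pV (Sum.inl ())) (hB w)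
    rw [map_sub, map_smul] at h0
    have e1 : Stmt15.pV (Sum.inl ())
        (fderiv ℝ (fun u : Evo n => ((1 : ℝ), Q u, P u)) w (σ w, ξ w, η w)) = 0 := by
      rw [← Stmt15.pV_fderiv (Stmt15.diff_f hX w)]
      have e : (fun u : Evo n => Stmt15.pV (Sum.inl ()) (((1 : ℝ), Q u, P u) : Evo n))
          = fun _ => (1 : ℝ) := rfl
      rw [e, fderiv_fun_const]
      simp
    have e2 : Stmt15.pV (Sum.inl ())
        (fderiv ℝ (fun u : Evo n => ((σ u, ξ u, η u) : Evo n)) w ((1 : ℝ), Q w, P w))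
        = fderiv ℝ σ w ((1 : ℝ), Q w, P w) :=
      (Stmt15.pV_fderiv (Stmt15.diff_f hY w) _ _).symm
    rw [e1, e2, Stmt15.pV_inl] at h0
    simp only [smul_eq_mul, mul_one] at h0
    linarith
  have hsum : ∀ w : Evo n,
      fderiv ℝ (fun u => R u * σ u) w (1, 0, 0)
        + ∑ i, (fderiv ℝ (fun u => R u * ξ u i) w (0, Pi.single i 1, 0)
            + fderiv ℝ (fun u => R u * η u i) w (0, 0, Pi.single i 1))
      = fderiv ℝ R w ((σ w, ξ w, η w) : Evo n)
        + R w * Stmt15.dv (fun u : Evo n => ((σ u, ξ u, η u) : Evo n)) w := by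
    intro w
    have hterm : ∀ j : Stmt15.J n,
        fderiv ℝ (fun u => R u * Stmt15.pV j (((σ u, ξ u, η u)) : Evo n)) w (Stmt15.eV j)
          = fderiv ℝ R w (Stmt15.eV j) * Stmt15.pV j (((σ w, ξ w, η w)) : Evo n)
            + R w * Stmt15.pV j
                (fderiv ℝ (fun u : Evo n => ((σ u, ξ u, η u) : Evo n)) w (Stmt15.eV j)) := by
      intro j
      have hd : DifferentiableAt ℝ (fun u : Evo n => Stmt15.pV j (((σ u, ξ u, η u)) : Evo n)) w :=
        (Stmt15.pV j).differentiableAt.comp w (Stmt15.diff_f hY w)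
      rw [fderiv_fun_mul (Stmt15.diff_f hR w) hd]
      simp only [ContinuousLinearMap.add_apply, ContinuousLinearMap.smul_apply, smul_eq_mul]
      rw [Stmt15.pV_fderiv (Stmt15.diff_f hY w)]
      ring
    have hsplit : (∑ j : Stmt15.J n,
        fderiv ℝ (fun u => R u * Stmt15.pV j (((σ u, ξ u, η u)) : Evo n)) w (Stmt15.eV j))
        = fderiv ℝ (fun u => R u * σ u) w (1, 0, 0)
          + ∑ i, (fderiv ℝ (fun u => R u * ξ u i) w (0, Pi.single i 1, 0)
              + fderiv ℝ (fun u => R u * η u i) w (0, 0, Pi.single i 1)) := by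
      rw [Fintype.sum_sum_type, Fintype.sum_sum_type, Fintype.sum_unique,
        ← Finset.sum_add_distrib]
      rfl
    rw [← hsplit, Finset.sum_congr rfl fun j _ => hterm j, Finset.sum_add_distrib,
      ← Finset.mul_sum]
    congr 1
    · rw [Stmt15.clm_expand (fderiv ℝ R w) (((σ w, ξ w, η w)) : Evo n)]
      exact Finset.sum_congr rfl fun j _ => mul_comm _ _
  have Ifun : (fun w : Evo n =>
      (1 / R w) * (fderiv ℝ (fun u => R u * σ u) w (1, 0, 0)
        + ∑ i, (fderiv ℝ (fun u => R u * ξ u i) w (0, Pi.single i 1, 0)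
            + fderiv ℝ (fun u => R u * η u i) w (0, 0, Pi.single i 1)))
      - fderiv ℝ σ w (1, Q w, P w))
      = fun w : Evo n => fderiv ℝ R w ((σ w, ξ w, η w) : Evo n) / R w
          + Stmt15.dv (fun u : Evo n => ((σ u, ξ u, η u) : Evo n)) w + h w := by
    funext w
    rw [hsum w, F1 w]
    have hne : R w ≠ 0 := (hRpos w).ne'
    field_simp
    ring
  rw [Ifun]
  exact Stmt15.key _ _ R h hX hY hR hh hRpos hJ hB z
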